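/- arXiv:1703.00988 — 2 statements merged into one kernel-verified Lean document; each statement's English description precedes it below -/
import Mathlib

section
/- If A is an elementary abelian group of order q^2 (q prime, q coprime to |G|) acting on a finite group G, then G is generated by the centralizers C_G(a) as a ranges over the nonidentity elements of A. -/
/-- The subgroup of elements of `G` fixed by every automorphism `φ a`, `a ∈ S`. -/
def fixedSubgroup {A G : Type*} [Group G] (φ : A → MulAut G) (S : Set A) : Subgroup G where
  carrier := {g | ∀ a ∈ S, φ a g = g}
  one_mem' := by intro a _; simp
  mul_mem' := by intro x y hx hy a ha; rw [map_mul, hx a ha, hy a ha]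
  inv_mem' := by intro x hx a ha; rw [map_inv, hx a ha]

/-!
Induction on `|G|`. If `G` is abelian, write `N_B(v) = ∏_{b ∈ B} b(v)` for `B ≤ A`; it is fixed
by `B`. The `q + 1` subgroups of order `q` partition `A^#`, so the product of the `N_B(v)` over
them is `v^q N_A(v)`; hence `v^q`, and by coprimality `v`, lies in `⟨C_G(a) | a ∈ A^#⟩`.
If `Z(G) = 1`, then `A` fixes a Sylow `p`-subgroup for every `p`, since it acts on `Syl_p(G)`,
a set of size prime to `q`; such a subgroup is proper, so it lies in `⟨C_G(a)⟩` by induction.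
Otherwise apply induction to `Z(G)` and `G / Z(G)`: a fixed point of `a` on `G / Z(G)` lifts
to `G` because `⟨a⟩` acts on the corresponding coset, whose size `|Z(G)|` is prime to `q`.
-/

namespace CoprimeAction

open Subgroup

section Basic

variable {A G : Type*} [Group A] [Group G] (φ : A →* MulAut G)

def fixedBy (a : A) : Subgroup G := fixedSubgroup (fun _ : Unit => φ a) Set.univ

/-- `⟨C_G(a) | a ∈ A^#⟩` -/
def supFixedBy : Subgroup G := ⨆ (a : A) (_ : a ≠ 1), fixedBy φ a

def IsInvariant (H : Subgroup G) : Prop := ∀ a : A, ∀ g ∈ H, φ a g ∈ H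

variable {φ}

lemma mem_fixedBy {a : A} {g : G} : g ∈ fixedBy φ a ↔ φ a g = g :=
  ⟨fun h => h () trivial, fun h _ _ => h⟩

lemma fixedBy_le_supFixedBy {a : A} (ha : a ≠ 1) : fixedBy φ a ≤ supFixedBy φ :=
  le_iSup₂_of_le a ha le_rfl

end Basic

section Abelian

open Finset
open scoped Classical

lemma prod_mem_fixedBy {A V : Type*} [Group A] [CommGroup V] (φ : A →* MulAut V) {s : Finset A}
    {c : A} (hs : ∀ a, c * a ∈ s ↔ a ∈ s) (v : V) : ∏ a ∈ s, φ a v ∈ fixedBy φ c := by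
  rw [mem_fixedBy, map_prod]
  exact prod_equiv (Equiv.mulLeft c) (fun a => (hs a).symm) (by simp [MulAut.mul_apply])

variable {q : ℕ} {A : Type*} [Group A] [Fintype A]

lemma filter_zpowers_eq_erase_one (hq : q.Prime) (hexp : ∀ a : A, a ^ q = 1) {c : A}
    (hc : c ≠ 1) :
    {x ∈ univ.erase (1 : A) | zpowers x = zpowers c} = (univ.filter (· ∈ zpowers c)).erase 1 := by
  have := Fact.mk hq
  ext x
  simp only [mem_filter, mem_erase, mem_univ, and_true, true_and]
  refine ⟨fun ⟨hx, h⟩ => ⟨hx, h ▸ mem_zpowers x⟩, fun ⟨hx, hxc⟩ => ⟨hx, ?_⟩⟩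
  refine eq_of_le_of_card_ge (zpowers_le.2 hxc) ?_
  rw [Nat.card_zpowers, Nat.card_zpowers, orderOf_eq_prime (hexp x) hx,
    orderOf_eq_prime (hexp c) hc]

lemma prod_image_zpowers {M : Type*} [CommMonoid M] (hq : q.Prime) (hexp : ∀ a : A, a ^ q = 1)
    (f : A → M) :
    ∏ B ∈ (univ.erase 1).image zpowers, ∏ x ∈ (univ.filter (· ∈ B)).erase 1, f x =
      ∏ x ∈ univ.erase 1, f x :=
  prod_image' f fun c hc => by rw [filter_zpowers_eq_erase_one hq hexp (ne_of_mem_erase hc)]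

lemma card_image_zpowers (hq : q.Prime) (hcard : Nat.card A = q ^ 2)
    (hexp : ∀ a : A, a ^ q = 1) :
    #((univ.erase (1 : A)).image zpowers) = q + 1 := by
  have := Fact.mk hq
  have hfiber : ∀ B ∈ (univ.erase (1 : A)).image zpowers,
      #{x ∈ univ.erase 1 | zpowers x = B} = q - 1 := by
    simp only [mem_image]
    rintro _ ⟨c, hc, rfl⟩
    have hc1 := ne_of_mem_erase hc
    rw [filter_zpowers_eq_erase_one hq hexp hc1, card_erase_of_mem (by simp [one_mem]),
      ← Fintype.card_subtype, ← Nat.card_eq_fintype_card, Nat.card_zpowers,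
      orderOf_eq_prime (hexp c) hc1]
  have h := card_eq_sum_card_image zpowers (univ.erase (1 : A))
  rw [sum_congr rfl hfiber, sum_const, smul_eq_mul, card_erase_of_mem (mem_univ _), card_univ,
    ← Nat.card_eq_fintype_card, hcard, ← one_pow 2, Nat.sq_sub_sq, one_pow] at h
  exact (Nat.eq_of_mul_eq_mul_right (Nat.sub_pos_of_lt hq.one_lt) h).symm

variable {V : Type*} [CommGroup V] (φ : A →* MulAut V)

lemma pow_mem_supFixedBy (hq : q.Prime) (hcard : Nat.card A = q ^ 2)
    (hexp : ∀ a : A, a ^ q = 1) (v : V) : v ^ q ∈ supFixedBy φ := by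
  set S := (univ.erase (1 : A)).image zpowers
  have hnorm (B : Subgroup A) :
      ∏ a ∈ univ.filter (· ∈ B), φ a v = v * ∏ a ∈ (univ.filter (· ∈ B)).erase 1, φ a v := by
    rw [← mul_prod_erase _ _ (by simp [one_mem] : (1 : A) ∈ _), map_one, MulAut.one_apply]
  have hdecomp : v ^ q = (∏ B ∈ S, ∏ a ∈ univ.filter (· ∈ B), φ a v) * (∏ a, φ a v)⁻¹ := by
    rw [prod_congr rfl fun B _ => hnorm B, prod_mul_distrib, prod_const,
      card_image_zpowers hq hcard hexp, prod_image_zpowers hq hexp,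
      ← mul_prod_erase univ _ (mem_univ 1), map_one, MulAut.one_apply]
    group
  have : Nontrivial A := by
    rw [← Finite.one_lt_card_iff_nontrivial, hcard]
    exact one_lt_pow₀ hq.one_lt two_ne_zero
  obtain ⟨a, ha⟩ := exists_ne (1 : A)
  rw [hdecomp]
  refine mul_mem (prod_mem fun B hB => ?_) (inv_mem ?_)
  · obtain ⟨c, hc, rfl⟩ := mem_image.1 hB
    exact fixedBy_le_supFixedBy (ne_of_mem_erase hc)
      (prod_mem_fixedBy φ (by simp [(zpowers c).mul_mem_cancel_left (mem_zpowers c)]) v)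
  · exact fixedBy_le_supFixedBy ha (prod_mem_fixedBy φ (by simp) v)

theorem supFixedBy_eq_top_of_comm [Finite V] (hq : q.Prime) (hcard : Nat.card A = q ^ 2)
    (hexp : ∀ a : A, a ^ q = 1) (hcop : q.Coprime (Nat.card V)) : supFixedBy φ = ⊤ := by
  refine eq_top_iff.2 fun v _ => ?_
  obtain ⟨w, rfl⟩ := (Nat.Coprime.pow_left_bijective hcop.symm).2 v
  exact pow_mem_supFixedBy φ hq hcard hexp w

end Abelian

section Restrict

variable {A G : Type*} [Group A] [Group G] {φ : A →* MulAut G} {H : Subgroup G}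

lemma IsInvariant.map_eq (hH : IsInvariant φ H) (a : A) : H.map (φ a).toMonoidHom = H :=
  le_antisymm (map_le_iff_le_comap.2 fun g hg => hH a g hg)
    fun g hg => ⟨φ a⁻¹ g, hH _ g hg, by simp⟩

variable (φ H) in
def restrictAut (hH : IsInvariant φ H) : A →* MulAut H where
  toFun a :=
    { toFun := fun g => ⟨φ a g, hH a g g.2⟩
      invFun := fun g => ⟨φ a⁻¹ g, hH a⁻¹ g g.2⟩
      left_inv := fun g => by ext; simp
      right_inv := fun g => by ext; simp
      map_mul' := fun g h => by ext; simp }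
  map_one' := by ext; simp
  map_mul' := fun a b => by ext; simp

lemma le_supFixedBy_of_restrict (hH : IsInvariant φ H)
    (h : supFixedBy (restrictAut φ H hH) = ⊤) : H ≤ supFixedBy φ := by
  have hle : supFixedBy (restrictAut φ H hH) ≤ (supFixedBy φ).comap H.subtype :=
    iSup₂_le fun a ha g hg =>
      fixedBy_le_supFixedBy ha (mem_fixedBy.2 (congrArg Subtype.val (mem_fixedBy.1 hg)))
  exact fun g hg => hle (h ▸ mem_top (⟨g, hg⟩ : H))

end Restrict

section Quotient

variable {A G : Type*} [Group A] [Group G] {φ : A →* MulAut G} {N : Subgroup G} [N.Normal]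

variable (φ N) in
def quotientAut (hN : IsInvariant φ N) : A →* MulAut (G ⧸ N) where
  toFun a := QuotientGroup.congr N N (φ a) (hN.map_eq a)
  map_one' := by
    ext x
    induction x using QuotientGroup.induction_on
    simp
  map_mul' a b := by
    ext x
    induction x using QuotientGroup.induction_on
    simp [MulAut.mul_apply]
    rfl

@[simp]
lemma quotientAut_mk (hN : IsInvariant φ N) (a : A) (g : G) :
    quotientAut φ N hN a g = (φ a g : G ⧸ N) :=
  QuotientGroup.congr_mk N N (φ a) (hN.map_eq a) g

lemma exists_fixed_lift [Finite G] {q : ℕ} (hq : q.Prime) (hN : IsInvariant φ N)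
    (hcop : ¬ q ∣ Nat.card N) {a : A} (ha : a ^ q = 1) {x : G ⧸ N}
    (hx : quotientAut φ N hN a x = x) : ∃ g : G, φ a g = g ∧ (g : G ⧸ N) = x := by
  have := Fact.mk hq
  set P := zpowers (φ a)
  have hP : IsPGroup q P := IsPGroup.of_card_dvd_pow (n := 1) <| by
    rw [Nat.card_zpowers, pow_one]
    exact orderOf_dvd_of_pow_eq_one (by rw [← map_pow, ha, map_one])
  have hPx : ∀ σ ∈ P, ∀ g : G, (g : G ⧸ N) = x → (σ g : G ⧸ N) = x := by
    rintro _ ⟨k, rfl⟩ g rfl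
    have hstab : quotientAut φ N hN a ∈ MulAction.stabilizer (MulAut (G ⧸ N)) (g : G ⧸ N) := hx
    have hk := zpow_mem hstab k
    rwa [MulAction.mem_stabilizer_iff, ← map_zpow, MulAut.smul_def, quotientAut_mk,
      map_zpow] at hk
  let F : SubMulAction P G :=
    { carrier := QuotientGroup.mk ⁻¹' {x}
      smul_mem' := fun σ g hg => hPx σ σ.2 g hg }
  have hF : Nat.card F = Nat.card N := by
    change Nat.card (QuotientGroup.mk ⁻¹' {x} : Set G) = _
    rw [Nat.card_congr (QuotientGroup.preimageMkEquivSubgroupProdSet N {x}), Nat.card_prod,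
      Nat.card_unique (α := ({x} : Set (G ⧸ N))), mul_one]
  obtain ⟨⟨g, hg⟩, hfix⟩ := hP.nonempty_fixed_point_of_prime_not_dvd_card F (hF ▸ hcop)
  exact ⟨g, congrArg Subtype.val (hfix ⟨φ a, mem_zpowers _⟩), hg⟩

lemma supFixedBy_eq_top_of_quotient [Finite G] {q : ℕ} (hq : q.Prime)
    (hexp : ∀ a : A, a ^ q = 1) (hN : IsInvariant φ N) (hcop : ¬ q ∣ Nat.card N)
    (hquot : supFixedBy (quotientAut φ N hN) = ⊤) (hNle : N ≤ supFixedBy φ) :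
    supFixedBy φ = ⊤ := by
  have hmap : supFixedBy (quotientAut φ N hN) ≤ (supFixedBy φ).map (QuotientGroup.mk' N) :=
    iSup₂_le fun a ha x hx => by
      obtain ⟨g, hg, rfl⟩ := exists_fixed_lift hq hN hcop (hexp a) (mem_fixedBy.1 hx)
      exact ⟨g, fixedBy_le_supFixedBy ha (mem_fixedBy.2 hg), rfl⟩
  rw [hquot, top_le_iff] at hmap
  rw [← comap_map_eq_self (H := supFixedBy φ) (f := QuotientGroup.mk' N)
    (by rwa [QuotientGroup.ker_mk']), hmap, comap_top]

end Quotient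

section Sylow

open scoped Pointwise

variable {G : Type*} [Group G] [Finite G]

lemma exists_sylow_isInvariant {q : ℕ} [Fact q.Prime] {A : Type*} [Group A] (hA : IsPGroup q A)
    (φ : A →* MulAut G) (hcop : ¬ q ∣ Nat.card G) (p : ℕ) [Fact p.Prime] :
    ∃ P : Sylow p G, IsInvariant φ P := by
  let := MulDistribMulAction.compHom G φ
  obtain ⟨P₀⟩ : Nonempty (Sylow p G) := Sylow.nonempty
  obtain ⟨P, hP⟩ := hA.nonempty_fixed_point_of_prime_not_dvd_card (Sylow p G)
    fun h => hcop (h.trans (P₀.card_dvd_index.trans (index_dvd_card _)))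
  refine ⟨P, fun a g hg => ?_⟩
  rw [← hP a]
  exact smul_mem_pointwise_smul g a _ hg

lemma _root_.Sylow.ne_top_of_center_eq_bot [Nontrivial G] {p : ℕ} [Fact p.Prime] (h : center G = ⊥)
    (P : Sylow p G) : (P : Subgroup G) ≠ ⊤ := fun hP =>
  (P.isPGroup'.of_equiv ((MulEquiv.subgroupCongr hP).trans topEquiv)).bot_lt_center.ne' h

lemma _root_.Subgroup.eq_top_of_forall_sylow_le {H : Subgroup G}
    (h : ∀ (p : ℕ) [Fact p.Prime], ∃ P : Sylow p G, (P : Subgroup G) ≤ H) : H = ⊤ := by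
  refine (card_eq_iff_eq_top H).1 (Nat.dvd_antisymm (card_subgroup_dvd_card H) ?_)
  refine (Nat.factorization_prime_le_iff_dvd Nat.card_pos.ne' Nat.card_pos.ne').1 fun p hp => ?_
  have := Fact.mk hp
  obtain ⟨P, hP⟩ := h p
  rw [← hp.pow_dvd_iff_le_factorization Nat.card_pos.ne', ← P.card_eq_multiplicity]
  exact card_dvd_of_le hP

end Sylow

theorem supFixedBy_eq_top {q : ℕ} (hq : q.Prime) {A : Type*} [Group A] [Finite A]
    (hcard : Nat.card A = q ^ 2) (hexp : ∀ a : A, a ^ q = 1) {G : Type*} [Group G] [Finite G]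
    (φ : A →* MulAut G) (hcop : q.Coprime (Nat.card G)) : supFixedBy φ = ⊤ := by
  have := Fact.mk hq
  have := Fintype.ofFinite A
  induction hn : Nat.card G using Nat.strong_induction_on generalizing G with
  | _ n ih =>
  have hsub (H : Subgroup G) (hH : IsInvariant φ H) (hne : H ≠ ⊤) : H ≤ supFixedBy φ :=
    le_supFixedBy_of_restrict hH <| ih _ (hn ▸ (card_le_card_group H).lt_of_ne
      ((card_eq_iff_eq_top H).not.2 hne)) _ (hcop.coprime_dvd_right (card_subgroup_dvd_card H)) rfl
  rcases eq_or_ne (center G) ⊤ with hZ | hZ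
  · let := Group.commGroupOfCenterEqTop hZ
    exact supFixedBy_eq_top_of_comm φ hq hcard hexp hcop
  have : Nontrivial G := (subsingleton_or_nontrivial G).resolve_left fun _ =>
    hZ (Subsingleton.elim _ _)
  rcases eq_or_ne (center G) ⊥ with hZ' | hZ'
  · refine Subgroup.eq_top_of_forall_sylow_le fun p _ => ?_
    obtain ⟨P, hP⟩ := exists_sylow_isInvariant (IsPGroup.of_card hcard) φ
      (hq.coprime_iff_not_dvd.1 hcop) p
    exact ⟨P, hsub P hP (P.ne_top_of_center_eq_bot hZ')⟩
  have hZinv : IsInvariant φ (center G) := fun a g hg =>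
    characteristic_iff_map_le.1 centerCharacteristic (φ a) ⟨g, hg, rfl⟩
  have hlt : Nat.card (G ⧸ center G) < Nat.card G := by
    rw [card_eq_card_quotient_mul_card_subgroup (center G)]
    exact lt_mul_of_one_lt_right Nat.card_pos ((one_lt_card_iff_ne_bot _).2 hZ')
  refine supFixedBy_eq_top_of_quotient hq hexp hZinv
    (hq.coprime_iff_not_dvd.1 (hcop.coprime_dvd_right (card_subgroup_dvd_card _)))
    ?_ (hsub _ hZinv hZ)
  exact ih _ (hn ▸ hlt) _ (hcop.coprime_dvd_right (card_quotient_dvd_card _)) rfl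

end CoprimeAction

/-- if `A` is an elementary abelian group of order `q^2` (`q` a prime coprime to
`|G|`) acting on a finite group `G`, then `G` is generated by the centralizers `C_G(a)`,
`a ∈ A^#`. -/
theorem stmt_2 {q : ℕ} (hq : q.Prime) {A G : Type*} [CommGroup A] [Finite A]
    [Group G] [Finite G]
    (hcard : Nat.card A = q ^ 2) (hexp : ∀ a : A, a ^ q = 1)
    (φ : A →* MulAut G) (hcop : Nat.Coprime q (Nat.card G)) :
    (⨆ (a : A) (_ : a ≠ 1), fixedSubgroup (fun _ : Unit => φ a) Set.univ) = ⊤ :=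
  CoprimeAction.supFixedBy_eq_top hq hcard hexp φ hcop
end

section
/- Let L be a Lie algebra, H a subalgebra of L generated by finitely many elements h_1, ..., h_m such that every Lie commutator in the generators h_i is ad-nilpotent as an operator on L. If H is nilpotent, then there exists a positive integer d such that [L, H, H, ..., H] = 0 with d copies of H. -/
/-- The iterated Lie commutators in the elements of a set `s`. -/
inductive IsLieWord {L : Type*} [LieRing L] (s : Set L) : L → Prop
  | base {x : L} : x ∈ s → IsLieWord s x
  | bracket {x y : L} : IsLieWord s x → IsLieWord s y → IsLieWord s ⁅x, y⁆

/-- `bracketChain F H n` is `[L, H, ..., H]` with `n` copies of `H`. -/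
def bracketChain {F L : Type*} [Field F] [LieRing L] [LieAlgebra F L]
    (H : LieSubalgebra F L) : ℕ → Submodule F L
  | 0 => ⊤
  | n + 1 => Submodule.span F {z : L | ∃ x ∈ bracketChain H n, ∃ y ∈ H, z = ⁅x, y⁆}

/-!
If `H` is nilpotent with `lowerCentralSeries H k = ⊥`, every commutator of length `> k` in the
generators vanishes, so `H` is spanned by the finitely many commutators `w` of length `≤ k`, and
each `x_w = ad w` is nilpotent. Since `⁅x_a, x_b⁆ = x_{⁅a, b⁆}` and lengths add, any product of
the `x_w` can be straightened, as in the proof of the PBW theorem, into a `ℤ`-combination of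
products sorted along an order refining the length, of no smaller total length. A sorted product
with enough factors contains some `x_w ^ N = 0` as a block, so all products of sufficiently many
`x_w` vanish; and `[L, H, …, H]` with `d` copies of `H` is spanned by values of such products of
`d` factors.
-/

open LieModule LieSubalgebra

theorem AddMonoidHom.apply_mem_closure_of_forall {G H : Type*} [AddGroup G] [AddGroup H]
    (f : G →+ H) {s : Set G} {t : Set H} (hst : ∀ b ∈ s, f b ∈ AddSubgroup.closure t) {a : G}
    (ha : a ∈ AddSubgroup.closure s) : f a ∈ AddSubgroup.closure t :=
  (AddSubgroup.closure_le ((AddSubgroup.closure t).comap f)).2 hst ha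

namespace List

theorem Pairwise.eq_filter_lt_append_replicate_append_filter_gt {α : Type*} [LinearOrder α]
    {l : List α} (hl : l.Pairwise (· ≤ ·)) (a : α) :
    l = l.filter (· < a) ++ replicate (l.count a) a ++ l.filter (a < ·) := by
  refine Perm.eq_of_sortedLE hl.sortedLE ?_ ?_
  · simp only [sortedLE_iff_pairwise, pairwise_append, pairwise_replicate, mem_append, mem_filter,
      mem_replicate, decide_eq_true_eq]
    refine ⟨⟨hl.filter _, by simp, ?_⟩, hl.filter _, ?_⟩
    · rintro b ⟨-, hb⟩ c ⟨-, rfl⟩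
      exact hb.le
    · rintro b (⟨-, hb⟩ | ⟨-, rfl⟩) c ⟨-, hc⟩
      · exact (hb.trans hc).le
      · exact hc.le
  · rw [← Multiset.coe_eq_coe]
    ext b
    simp only [← Multiset.filter_coe, Multiset.count_filter, ← Multiset.coe_add,
      Multiset.coe_replicate, Multiset.count_add, Multiset.count_replicate, Multiset.coe_count]
    grind

theorem prod_map_eq_zero_of_pairwise_le_of_le_count {α M : Type*} [LinearOrder α]
    [MonoidWithZero M] {x : α → M} {l : List α} (hl : l.Pairwise (· ≤ ·)) {a : α} {N : ℕ}
    (hN : x a ^ N = 0) (hcount : N ≤ l.count a) : (l.map x).prod = 0 := by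
  rw [hl.eq_filter_lt_append_replicate_append_filter_gt a]
  simp [pow_eq_zero_of_le hcount hN]

theorem exists_le_count_of_mul_card_lt_length {α : Type*} [Fintype α] [DecidableEq α]
    {l : List α} {N : ℕ} (hl : (N - 1) * Fintype.card α < l.length) : ∃ a, N ≤ l.count a := by
  have hsum : ∑ a, l.count a = l.length := by
    simpa using Multiset.sum_count_eq_card (s := Finset.univ) (m := (l : Multiset α)) (by simp)
  obtain ⟨a, -, ha⟩ := Finset.exists_lt_of_sum_lt (f := fun _ => N - 1) (g := l.count)
    (s := Finset.univ) (by simpa [hsum, mul_comm] using hl)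
  exact ⟨a, by omega⟩

end List

section Straightening

variable {R ι : Type*} [Ring R] [LinearOrder ι] {x : ι → R} {wt : ι → ℕ}

/-- The lower-bound clause is what lets the induction prepend a smaller letter to `t` and stay
sorted. -/
theorem mul_prod_mem_closure_sorted (hpos : ∀ i, 0 < wt i) (hmono : ∀ i j, wt i < wt j → i < j)
    (hbr : ∀ i j, x i * x j - x j * x i ∈ AddSubgroup.closure (x '' {l | wt i + wt j ≤ wt l}))
    (s : List ι) (hs : s.Pairwise (· ≤ ·)) (w : ι) :
    x w * (s.map x).prod ∈ AddSubgroup.closure ((fun t : List ι => (t.map x).prod) ''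
      {t | t.Pairwise (· ≤ ·) ∧ wt w + (s.map wt).sum ≤ (t.map wt).sum ∧
        ∀ b, (∀ u ∈ w :: s, b ≤ u) → ∀ u ∈ t, b ≤ u}) := by
  induction s generalizing w with
  | nil => exact AddSubgroup.subset_closure ⟨[w], ⟨by simp, by simp, fun _ hb => hb⟩, by simp⟩
  | cons v s ih =>
    obtain ⟨hvs, hs⟩ := List.pairwise_cons.mp hs
    rcases le_or_gt w v with hwv | hvw
    · refine AddSubgroup.subset_closure ⟨w :: v :: s, ⟨?_, le_rfl, fun _ hb => hb⟩, by simp⟩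
      exact .cons (List.forall_mem_cons.2 ⟨hwv, fun u hu => hwv.trans (hvs u hu)⟩) (.cons hvs hs)
    have hswap : x w * (x v * (s.map x).prod) =
        x v * (x w * (s.map x).prod) + (x w * x v - x v * x w) * (s.map x).prod := by
      noncomm_ring
    rw [List.map_cons (f := x), List.prod_cons, hswap]
    refine add_mem ?_ ?_
    · refine (AddMonoidHom.mulLeft (x v)).apply_mem_closure_of_forall ?_ (ih hs w)
      rintro _ ⟨t, ⟨ht, hwt, hlb⟩, rfl⟩
      have hvt : ∀ u ∈ t, v ≤ u := hlb v (List.forall_mem_cons.2 ⟨hvw.le, hvs⟩)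
      refine AddSubgroup.subset_closure ⟨v :: t, ⟨ht.cons hvt, ?_, fun b hb => ?_⟩, by simp⟩
      · simp only [List.map_cons, List.sum_cons] at hwt ⊢
        omega
      · simp only [List.forall_mem_cons] at hb ⊢
        exact ⟨hb.2.1, hlb b (List.forall_mem_cons.2 ⟨hb.1, hb.2.2⟩)⟩
    · refine (AddMonoidHom.mulRight (s.map x).prod).apply_mem_closure_of_forall ?_ (hbr w v)
      rintro _ ⟨u, hu : wt w + wt v ≤ wt u, rfl⟩
      have hwu : w < u := hmono _ _ (by have := hpos v; omega)
      refine AddSubgroup.closure_mono ?_ (ih hs u)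
      rintro _ ⟨t, ⟨ht, hwt, hlb⟩, rfl⟩
      refine ⟨t, ⟨ht, ?_, fun b hb => hlb b ?_⟩, rfl⟩
      · simp only [List.map_cons, List.sum_cons] at hwt ⊢
        omega
      · simp only [List.forall_mem_cons] at hb
        exact List.forall_mem_cons.2 ⟨hb.2.1.trans (hvw.trans hwu).le, hb.2.2⟩

theorem prod_mem_closure_sorted (hpos : ∀ i, 0 < wt i) (hmono : ∀ i j, wt i < wt j → i < j)
    (hbr : ∀ i j, x i * x j - x j * x i ∈ AddSubgroup.closure (x '' {l | wt i + wt j ≤ wt l}))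
    (l : List ι) :
    (l.map x).prod ∈ AddSubgroup.closure ((fun t : List ι => (t.map x).prod) ''
      {t | t.Pairwise (· ≤ ·) ∧ (l.map wt).sum ≤ (t.map wt).sum}) := by
  induction l with
  | nil => exact AddSubgroup.subset_closure ⟨[], ⟨.nil, le_rfl⟩, rfl⟩
  | cons w l ih =>
    rw [List.map_cons (f := x), List.prod_cons]
    refine (AddMonoidHom.mulLeft (x w)).apply_mem_closure_of_forall ?_ ih
    rintro _ ⟨t, ⟨ht, hwt⟩, rfl⟩
    refine AddSubgroup.closure_mono ?_ (mul_prod_mem_closure_sorted hpos hmono hbr t ht w)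
    rintro _ ⟨t', ⟨ht', hwt', -⟩, rfl⟩
    refine ⟨t', ⟨ht', ?_⟩, rfl⟩
    simp only [List.map_cons, List.sum_cons]
    omega

end Straightening

theorem exists_forall_le_length_prod_map_eq_zero {R ι : Type*} [Ring R] [Finite ι] {x : ι → R}
    {wt : ι → ℕ} (hpos : ∀ i, 0 < wt i)
    (hbr : ∀ i j, x i * x j - x j * x i ∈ AddSubgroup.closure (x '' {l | wt i + wt j ≤ wt l}))
    (hnil : ∀ i, IsNilpotent (x i)) :
    ∃ n, ∀ l : List ι, n ≤ l.length → (l.map x).prod = 0 := by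
  classical
  have := Fintype.ofFinite ι
  choose n hn using hnil
  set N := ∑ i, n i
  have hN (i : ι) : x i ^ N = 0 :=
    pow_eq_zero_of_le (Finset.single_le_sum (by simp) (Finset.mem_univ i)) (hn i)
  set W := ∑ i, wt i
  have hW (i : ι) : wt i ≤ W := Finset.single_le_sum (by simp) (Finset.mem_univ i)
  let _ : LinearOrder ι := LinearOrder.lift' (fun i => toLex (wt i, Fintype.equivFin ι i))
    (fun i j hij => (Fintype.equivFin ι).injective (congrArg (·.2) hij))
  have hmono : ∀ i j, wt i < wt j → i < j := fun i j h => Prod.Lex.toLex_lt_toLex.2 (.inl h)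
  -- a sorted product of total weight `> W * ((N - 1) * card ι + 1)` has more than
  -- `(N - 1) * card ι` factors, hence some factor `x a` repeated `N` times in a row
  refine ⟨W * ((N - 1) * Fintype.card ι + 1) + 1, fun l hl => ?_⟩
  have hlW : W * ((N - 1) * Fintype.card ι + 1) < (l.map wt).sum := by
    have := List.length_le_sum_of_one_le (l.map wt)
      (by simp only [List.mem_map]; rintro _ ⟨i, -, rfl⟩; exact hpos i)
    rw [List.length_map] at this
    omega
  refine AddSubgroup.mem_bot.1 ((AddSubgroup.closure_le ⊥).2 ?_
    (prod_mem_closure_sorted hpos hmono hbr l))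
  rintro _ ⟨t, ⟨ht, hlt⟩, rfl⟩
  have htW : (t.map wt).sum ≤ W * t.length := by
    simpa [mul_comm] using List.sum_le_card_nsmul (t.map wt) W (by simpa using fun i _ => hW i)
  have := Nat.lt_of_mul_lt_mul_left (hlW.trans_le (hlt.trans htW))
  obtain ⟨a, ha⟩ := List.exists_le_count_of_mul_card_lt_length (by omega : (N - 1) * _ < t.length)
  exact List.prod_map_eq_zero_of_pairwise_le_of_le_count ht (hN a) ha

theorem LieAlgebra.lie_mem_lowerCentralSeries {R K : Type*} [CommRing R] [LieRing K]
    [LieAlgebra R K] {a b : ℕ} {x y : K} (hx : x ∈ lowerCentralSeries R K K a)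
    (hy : y ∈ lowerCentralSeries R K K b) : ⁅x, y⁆ ∈ lowerCentralSeries R K K (a + b + 1) := by
  have lie_mem_succ : ∀ {a} {x : K} (u : K), x ∈ lowerCentralSeries R K K a →
      ⁅x, u⁆ ∈ lowerCentralSeries R K K (a + 1) := fun u hx => by
    rw [LieModule.lowerCentralSeries_succ, ← lie_skew]
    exact neg_mem (LieSubmodule.lie_mem_lie (LieSubmodule.mem_top u) hx)
  induction b generalizing a x y with
  | zero => exact lie_mem_succ y hx
  | succ b ih =>
    suffices (lowerCentralSeries R K K (b + 1)).toSubmodule ≤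
        (lowerCentralSeries R K K (a + (b + 1) + 1)).toSubmodule.comap (LieAlgebra.ad R K x) from
      this hy
    rw [LieModule.lowerCentralSeries_succ, LieSubmodule.lieIdeal_oper_eq_linear_span',
      Submodule.span_le]
    rintro _ ⟨u, -, v, hv, rfl⟩
    change ⁅x, ⁅u, v⁆⁆ ∈ lowerCentralSeries R K K (a + (b + 1) + 1)
    rw [leibniz_lie]
    refine add_mem ?_ ?_
    · have := ih (lie_mem_succ u hx) hv
      rwa [Nat.add_right_comm a 1 b] at this
    · rw [LieModule.lowerCentralSeries_succ]
      exact LieSubmodule.lie_mem_lie (LieSubmodule.mem_top u) (ih hx hv)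

namespace FreeMagma

variable {α R K K' : Type*}

def lieEval [LieRing K] (h : α → K) : FreeMagma α → K
  | of a => h a
  | x * y => ⁅lieEval h x, lieEval h y⁆

theorem isLieWord_lieEval [LieRing K] (h : α → K) (w : FreeMagma α) :
    IsLieWord (Set.range h) (lieEval h w) := by
  induction w using FreeMagma.rec with
  | of a => exact .base ⟨a, rfl⟩
  | mul x y hx hy => exact .bracket hx hy

theorem finite_setOf_length_le [Finite α] (c : ℕ) :
    {w : FreeMagma α | w.length ≤ c}.Finite := by
  induction c with
  | zero => simp [(length_pos _).ne']
  | succ c ih =>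
    refine ((Set.finite_range of).union (ih.image2 (· * ·) ih)).subset ?_
    rintro (a | ⟨x, y⟩) hw
    · exact .inl ⟨a, rfl⟩
    · replace hw : x.length + y.length ≤ c + 1 := hw
      have := x.length_pos
      have := y.length_pos
      exact .inr ⟨x, show x.length ≤ c by omega, y, show y.length ≤ c by omega, rfl⟩

variable [CommRing R] [LieRing K] [LieAlgebra R K]

theorem _root_.LieHom.map_lieEval [LieRing K'] [LieAlgebra R K'] (f : K →ₗ⁅R⁆ K') (h : α → K)
    (w : FreeMagma α) : f (lieEval h w) = lieEval (f ∘ h) w := by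
  induction w using FreeMagma.rec with
  | of a => rfl
  | mul x y hx hy => simp only [lieEval, LieHom.map_lie, hx, hy]

theorem lieEval_mem_lowerCentralSeries (h : α → K) (w : FreeMagma α) :
    lieEval h w ∈ lowerCentralSeries R K K (w.length - 1) := by
  induction w using FreeMagma.rec with
  | of a => simp
  | mul x y hx hy =>
    have := LieAlgebra.lie_mem_lowerCentralSeries hx hy
    rwa [show x.length - 1 + (y.length - 1) + 1 = (x * y).length - 1 by
      have := x.length_pos; have := y.length_pos; simp only [length]; omega] at this

theorem lieEval_eq_zero_of_lt_length {k : ℕ} (hk : lowerCentralSeries R K K k = ⊥)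
    (h : α → K) {w : FreeMagma α} (hw : k < w.length) : lieEval h w = 0 := by
  have := antitone_lowerCentralSeries R K K (by omega : k ≤ w.length - 1)
    (lieEval_mem_lowerCentralSeries h w)
  rwa [hk, LieSubmodule.mem_bot] at this

theorem coe_lieSpan_range_le_span_range_lieEval (h : α → K) :
    (lieSpan R K (Set.range h) : Submodule R K) ≤ Submodule.span R (Set.range (lieEval h)) := by
  have lie_mem : ∀ {x y}, x ∈ Submodule.span R (Set.range (lieEval h)) →
      y ∈ Submodule.span R (Set.range (lieEval h)) →
      ⁅x, y⁆ ∈ Submodule.span R (Set.range (lieEval h)) := fun hx hy => by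
    induction hx, hy using Submodule.span_induction₂ with
    | mem_mem x y hx hy =>
      obtain ⟨u, rfl⟩ := hx
      obtain ⟨v, rfl⟩ := hy
      exact Submodule.subset_span ⟨u * v, rfl⟩
    | zero_left y hy => simp
    | zero_right x hx => simp
    | add_left x y z _ _ _ hx hy => simp [add_mem hx hy]
    | add_right x y z _ _ _ hx hy => simp [add_mem hx hy]
    | smul_left r x y _ _ h => simp [Submodule.smul_mem _ r h]
    | smul_right r x y _ _ h => simp [Submodule.smul_mem _ r h]
  let K' : LieSubalgebra R K :=
    { Submodule.span R (Set.range (lieEval h)) with lie_mem' := lie_mem }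
  exact lieSpan_le (K := K').mpr (by rintro _ ⟨a, rfl⟩; exact Submodule.subset_span ⟨of a, rfl⟩)

theorem ad_lieEval_commutator_mem_closure {c : ℕ} {h : α → K}
    (hc : ∀ w : FreeMagma α, c < w.length → lieEval h w = 0)
    (a b : {w : FreeMagma α // w.length ≤ c}) :
    LieAlgebra.ad R K (lieEval h a) * LieAlgebra.ad R K (lieEval h b) -
        LieAlgebra.ad R K (lieEval h b) * LieAlgebra.ad R K (lieEval h a) ∈
      AddSubgroup.closure ((fun w : {w : FreeMagma α // w.length ≤ c} =>
        LieAlgebra.ad R K (lieEval h w)) '' {w | a.1.length + b.1.length ≤ w.1.length}) := by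
  have hcomm : LieAlgebra.ad R K (lieEval h a) * LieAlgebra.ad R K (lieEval h b) -
      LieAlgebra.ad R K (lieEval h b) * LieAlgebra.ad R K (lieEval h a) =
      LieAlgebra.ad R K (lieEval h (a.1 * b.1)) := by
    ext z
    simp [lieEval]
  rw [hcomm]
  by_cases hab : (a.1 * b.1).length ≤ c
  · exact AddSubgroup.subset_closure ⟨⟨_, hab⟩, by simp, rfl⟩
  · simp [hc _ (not_le.1 hab)]

end FreeMagma

theorem bracketChain_eq_bot_of_prod_ad_eq_zero {F L ι : Type*} [Field F] [LieRing L]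
    [LieAlgebra F L] {H : LieSubalgebra F L} {y : ι → L}
    (hH : H.toSubmodule ≤ Submodule.span F (Set.range y)) {d : ℕ}
    (hd : ∀ l : List ι, l.length = d → (l.map fun i => LieAlgebra.ad F L (y i)).prod = 0) :
    bracketChain H d = ⊥ := by
  suffices ∀ n (l : List ι), l.length + n = d →
      bracketChain H n ≤ LinearMap.ker (l.map fun i => LieAlgebra.ad F L (y i)).prod by
    simpa [Module.End.one_eq_id] using this d [] (by simp)
  intro n
  induction n with
  | zero => intro l hl; simp [hd l hl]
  | succ n ih =>
    intro l hl
    refine Submodule.span_le.2 ?_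
    rintro _ ⟨u, hu, v, hv, rfl⟩
    -- `⁅u, y i⁆ = -ad (y i) u`: bracketing with `H` appends a letter to the operator word
    have : Submodule.span F (Set.range y) ≤
        LinearMap.ker ((l.map fun i => LieAlgebra.ad F L (y i)).prod * LieAlgebra.ad F L u) := by
      refine Submodule.span_le.2 ?_
      rintro _ ⟨i, rfl⟩
      have := ih (l ++ [i]) (by simp; omega) hu
      simp only [SetLike.mem_coe, LinearMap.mem_ker, List.map_append, List.map_cons, List.map_nil,
        List.prod_append, List.prod_cons, List.prod_nil, mul_one, Module.End.mul_apply,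
        LieAlgebra.ad_apply] at this ⊢
      rw [← lie_skew, map_neg, this, neg_zero]
    exact this (hH hv)

/-- if `H = ⟨h₁, …, h_m⟩` is a subalgebra of a Lie algebra `L` such that every
Lie commutator in the generators `h_i` is ad-nilpotent on `L`, and `H` is nilpotent, then
`[L, H, …, H] = 0` for some number `d` of copies of `H`. -/
theorem stmt_9 {F L : Type*} [Field F] [LieRing L] [LieAlgebra F L]
    (m : ℕ) (h : Fin m → L) (H : LieSubalgebra F L)
    (hgen : H = LieSubalgebra.lieSpan F L (Set.range h))
    (had : ∀ x : L, IsLieWord (Set.range h) x → ∃ n : ℕ, (LieAlgebra.ad F L x) ^ n = 0)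
    (hnilp : LieRing.IsNilpotent H) :
    ∃ d : ℕ, 0 < d ∧ bracketChain H d = ⊥ := by
  obtain ⟨k, hk⟩ := (LieModule.isNilpotent_iff F H H).mp hnilp
  have hvanish (w : FreeMagma (Fin m)) (hw : k < w.length) : w.lieEval h = 0 := by
    let hH : Fin m → H := fun i => ⟨h i, hgen ▸ subset_lieSpan ⟨i, rfl⟩⟩
    have := congrArg H.incl (FreeMagma.lieEval_eq_zero_of_lt_length hk hH hw)
    rwa [H.incl.map_lieEval, map_zero] at this
  let ι := {w : FreeMagma (Fin m) // w.length ≤ k}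
  have : Finite ι := (FreeMagma.finite_setOf_length_le k).to_subtype
  have hspan : H.toSubmodule ≤ Submodule.span F (Set.range fun w : ι => w.1.lieEval h) := by
    refine hgen ▸ (FreeMagma.coe_lieSpan_range_le_span_range_lieEval h).trans
      (Submodule.span_le.2 ?_)
    rintro _ ⟨w, rfl⟩
    by_cases hw : w.length ≤ k
    · exact Submodule.subset_span ⟨⟨w, hw⟩, rfl⟩
    · simp [hvanish w (not_le.1 hw)]
  obtain ⟨n, hn⟩ := exists_forall_le_length_prod_map_eq_zero (fun w : ι => w.1.length_pos)
    (FreeMagma.ad_lieEval_commutator_mem_closure hvanish)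
    (fun w => had _ (FreeMagma.isLieWord_lieEval h w.1))
  exact ⟨n + 1, n.succ_pos,
    bracketChain_eq_bot_of_prod_ad_eq_zero hspan fun l hl => hn l (by omega)⟩
end
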